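/- arXiv:1311.7168 — 4 statements merged into one kernel-verified Lean document; each statement's English description precedes it below -/
import Mathlib

section
/- For every ρ ∈ ℝ^m and every x ∈ ∂Δ, the function s ↦ B(s,ρ,x) is strictly increasing on [0,1], B(0,ρ,x) = 0, and the partial derivative B_s satisfies B_s(0,ρ,x) = 0 while B_s(s,ρ,x) > 0 for all s ∈ (0,1). -/
open MeasureTheory Real Filter Set

noncomputable section

/-- The unit simplex Δ in ℝ^m. -/
def simplex (m : ℕ) : Set (Fin m → ℝ) :=
  {l | (∀ i, 0 ≤ l i) ∧ ∑ i, l i ≤ 1}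

/-- ⟨λ̂, log λ̂⟩ = Σ_{i=0}^m λ_i log λ_i, with λ_0 = 1 - Σ λ_i.
Note `Real.log 0 = 0`, so the convention 0·log 0 = 0 holds. -/
def ent (m : ℕ) (l : Fin m → ℝ) : ℝ :=
  (1 - ∑ i, l i) * Real.log (1 - ∑ i, l i) + ∑ i, l i * Real.log (l i)

/-- b(λ,ρ) = log(1+|e^ρ|) + Σ_{i=0}^m (λ_i log λ_i − ρ_i λ_i), where ρ_0 = 0. -/
def bfun (m : ℕ) (l ρ : Fin m → ℝ) : ℝ :=
  Real.log (1 + ∑ i, Real.exp (ρ i)) + ent m l - ∑ i, ρ i * l i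

/-- μ(ρ) : μ_i(ρ) = e^{ρ_i}/(1+|e^ρ|) for i = 1,…,m. -/
def mu (m : ℕ) (ρ : Fin m → ℝ) : Fin m → ℝ :=
  fun i => Real.exp (ρ i) / (1 + ∑ j, Real.exp (ρ j))

/-- B(s,ρ,x) = b((1−s)μ(ρ) + s x, ρ). -/
def Bfun (m : ℕ) (s : ℝ) (ρ x : Fin m → ℝ) : ℝ :=
  bfun m (fun i => (1 - s) * mu m ρ i + s * x i) ρ

/-- D(t,ρ) = m!·vol({λ ∈ Δ : b(λ,ρ) ≤ t}). -/
def Dfun (m : ℕ) (t : ℝ) (ρ : Fin m → ℝ) : ℝ :=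
  (m.factorial : ℝ) * (volume {l ∈ simplex m | bfun m l ρ ≤ t}).toReal

/-- F_n(ρ) = ∫_{Δ^n} max_j [⟨ρ,λ^j⟩ − ⟨λ̂^j, log λ̂^j⟩] dλ^1⋯dλ^n, each dλ^j = m!·Lebesgue. -/
def Fn (m n : ℕ) (ρ : Fin m → ℝ) : ℝ :=
  ((m.factorial : ℝ)) ^ n *
    ∫ L in {L : Fin n → Fin m → ℝ | ∀ j, L j ∈ simplex m},
      ⨆ j, (∑ i, ρ i * L j i - ent m (L j))

/-- Partial derivative in the variable ρ_p. -/
def pderivR (m : ℕ) (p : Fin m) (f : (Fin m → ℝ) → ℝ) (ρ : Fin m → ℝ) : ℝ :=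
  deriv (fun r => f (Function.update ρ p r)) (ρ p)

/-- H = {(t,ρ,x) ∈ (0,∞) × ℝ^m × ∂Δ : t < b(x,ρ)}. -/
def Hset (m : ℕ) : Set (ℝ × (Fin m → ℝ) × (Fin m → ℝ)) :=
  {q | q.2.2 ∈ frontier (simplex m) ∧ 0 < q.1 ∧ q.1 < bfun m q.2.2 q.2.1}

/-!
Write `λ̂ = (λ_0, λ_1, …, λ_m)`. Since `∑ λ̂_i = 1` and `log μ̂_i = ρ_i - log (1 + |e^ρ|)`,
`b(λ, ρ) = ∑_{i=0}^m λ̂_i (log λ̂_i - log μ̂_i)` is the relative entropy of `λ̂` with respect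
to `μ̂`. Along the segment `λ̂(s) = μ̂ + s d`, `d = x̂ - μ̂`, its derivative is
`∑ d_i (log λ̂_i(s) - log μ̂_i)` (the `+1` terms cancel since `∑ d_i = 0`). This vanishes at
`s = 0`, and for `s > 0` each term is `s⁻¹ (λ̂_i(s) - μ̂_i)(log λ̂_i(s) - log μ̂_i) ≥ 0` by
monotonicity of `log`, strictly where `d_i ≠ 0`; and `d ≠ 0` because `μ` lies in the interior
of `Δ` while `x` lies on its boundary.
-/

open Finset

theorem mul_sub_log_sub_log_pos {u v : ℝ} (hu : 0 < u) (hv : 0 < v) (huv : u ≠ v) :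
    0 < (u - v) * (log u - log v) := by
  rcases huv.lt_or_gt with h | h
  · exact mul_pos_of_neg_of_neg (sub_neg.2 h) (sub_neg.2 (log_lt_log hu h))
  · exact mul_pos (sub_pos.2 h) (sub_pos.2 (log_lt_log hv h))

theorem mul_sub_log_sub_log_nonneg {u v : ℝ} (hu : 0 < u) (hv : 0 < v) :
    0 ≤ (u - v) * (log u - log v) := by
  rcases eq_or_ne u v with rfl | huv
  · simp
  · exact (mul_sub_log_sub_log_pos hu hv huv).le

section RelEnt

variable {ι : Type*}

theorem add_mul_pos_of_mem_Ico {p d : ι → ℝ} (hp : ∀ i, 0 < p i) (hpd : ∀ i, 0 ≤ p i + d i)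
    {s : ℝ} (hs : s ∈ Set.Ico (0 : ℝ) 1) (i : ι) : 0 < p i + s * d i := by
  have h1 := mul_pos (sub_pos.2 hs.2) (hp i)
  have h2 := mul_nonneg hs.1 (hpd i)
  linear_combination h1 + h2

variable [Fintype ι]

def relEnt (q p : ι → ℝ) : ℝ :=
  ∑ i, q i * (log (q i) - log (p i))

@[simp]
theorem relEnt_self (p : ι → ℝ) : relEnt p p = 0 := by
  simp [relEnt]

theorem continuous_relEnt_line (p d : ι → ℝ) :
    Continuous fun t => relEnt (fun i => p i + t * d i) p := by
  simp only [relEnt, mul_sub]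
  exact continuous_finsetSum _ fun i _ =>
    (continuous_mul_log.comp (by fun_prop)).sub (by fun_prop)

theorem hasDerivAt_relEnt_line {p d : ι → ℝ} {s : ℝ} (hd : ∑ i, d i = 0)
    (hs : ∀ i, p i + s * d i ≠ 0) :
    HasDerivAt (fun t => relEnt (fun i => p i + t * d i) p)
      (∑ i, d i * (log (p i + s * d i) - log (p i))) s := by
  have hline (i : ι) : HasDerivAt (fun t => p i + t * d i) (d i) s := by
    simpa using ((hasDerivAt_id s).mul_const (d i)).const_add (p i)
  have hterm (i : ι) : HasDerivAt
      (fun t => (p i + t * d i) * log (p i + t * d i) - (p i + t * d i) * log (p i))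
      ((log (p i + s * d i) + 1) * d i - d i * log (p i)) s :=
    ((hasDerivAt_mul_log (hs i)).comp (h₂ := fun x => x * log x) s (hline i)).sub
      ((hline i).mul_const (log (p i)))
  simp only [relEnt, mul_sub]
  refine (HasDerivAt.fun_sum fun i _ => hterm i).congr_deriv ?_
  simp only [add_mul, one_mul, add_sub_right_comm, sum_add_distrib, hd, add_zero]
  exact sum_congr rfl fun i _ => by ring

theorem sum_mul_log_line_sub_log_pos {p d : ι → ℝ} (hp : ∀ i, 0 < p i) {s : ℝ} (hs : 0 < s)
    (hq : ∀ i, 0 < p i + s * d i) (hd : d ≠ 0) :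
    0 < ∑ i, d i * (log (p i + s * d i) - log (p i)) := by
  have hterm (i : ι) : d i * (log (p i + s * d i) - log (p i)) =
      s⁻¹ * ((p i + s * d i - p i) * (log (p i + s * d i) - log (p i))) := by
    field_simp
    ring
  obtain ⟨j, hj⟩ := Function.ne_iff.1 hd
  simp only [hterm]
  refine sum_pos' (fun i _ => mul_nonneg (inv_nonneg.2 hs.le)
    (mul_sub_log_sub_log_nonneg (hq i) (hp i))) ⟨j, mem_univ j, mul_pos (inv_pos.2 hs)
      (mul_sub_log_sub_log_pos (hq j) (hp j) ?_)⟩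
  simpa [hs.ne'] using hj

theorem strictMonoOn_relEnt_line {p d : ι → ℝ} (hp : ∀ i, 0 < p i)
    (hpd : ∀ i, 0 ≤ p i + d i) (hd0 : ∑ i, d i = 0) (hd : d ≠ 0) :
    StrictMonoOn (fun t => relEnt (fun i => p i + t * d i) p) (Set.Icc 0 1) := by
  refine strictMonoOn_of_deriv_pos (convex_Icc 0 1)
    (continuous_relEnt_line p d).continuousOn fun s hs => ?_
  rw [interior_Icc] at hs
  have hq := add_mul_pos_of_mem_Ico hp hpd ⟨hs.1.le, hs.2⟩
  rw [(hasDerivAt_relEnt_line hd0 fun i => (hq i).ne').deriv]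
  exact sum_mul_log_line_sub_log_pos hp hs.1 hq hd

end RelEnt

section Simplex

variable {m : ℕ}

/-- The vector `λ̂ = (λ_0, λ_1, …, λ_m)` with `λ_0 = 1 - ∑ λ_i`. -/
def hat (l : Fin m → ℝ) : Fin (m + 1) → ℝ :=
  Fin.cons (1 - ∑ i, l i) l

@[simp]
theorem hat_zero (l : Fin m → ℝ) : hat l 0 = 1 - ∑ i, l i := rfl

@[simp]
theorem hat_succ (l : Fin m → ℝ) (i : Fin m) : hat l i.succ = l i := rfl

theorem sum_hat (l : Fin m → ℝ) : ∑ j, hat l j = 1 := by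
  simp [Fin.sum_univ_succ]

theorem hat_line (a b : Fin m → ℝ) (s : ℝ) :
    hat (fun i => (1 - s) * a i + s * b i) = fun j => hat a j + s * (hat b j - hat a j) := by
  funext j
  cases j using Fin.cases with
  | zero => simp only [hat_zero, sum_add_distrib, ← mul_sum, sub_sub_sub_cancel_left]; ring
  | succ i => simp only [hat_succ]; ring

theorem continuous_hat : Continuous (hat (m := m)) := by
  refine continuous_pi fun j => ?_
  cases j using Fin.cases with
  | zero => simp only [hat_zero]; fun_prop
  | succ i => simp only [hat_succ]; fun_prop

theorem simplex_eq_preimage_hat : simplex m = hat ⁻¹' Set.Ici 0 := by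
  ext l
  simp [simplex, Pi.le_def, Fin.forall_fin_succ, and_comm]

theorem isClosed_simplex : IsClosed (simplex m) := by
  rw [simplex_eq_preimage_hat]
  exact isClosed_Ici.preimage continuous_hat

theorem hat_mu (ρ : Fin m → ℝ) (j : Fin (m + 1)) :
    hat (mu m ρ) j = exp ((Fin.cons 0 ρ : Fin (m + 1) → ℝ) j) / (1 + ∑ i, exp (ρ i)) := by
  have hE : 0 < 1 + ∑ i, exp (ρ i) := by positivity
  cases j using Fin.cases with
  | zero => simp only [hat_zero, mu, ← sum_div, Fin.cons_zero, exp_zero, one_div]; field_simp; ring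
  | succ i => simp [mu]

theorem hat_mu_pos (ρ : Fin m → ℝ) (j : Fin (m + 1)) : 0 < hat (mu m ρ) j := by
  rw [hat_mu]
  positivity

theorem log_hat_mu (ρ : Fin m → ℝ) (j : Fin (m + 1)) :
    log (hat (mu m ρ) j) = (Fin.cons 0 ρ : Fin (m + 1) → ℝ) j - log (1 + ∑ i, exp (ρ i)) := by
  rw [hat_mu, log_div (exp_ne_zero _) (by positivity), log_exp]

theorem mu_mem_interior_simplex (ρ : Fin m → ℝ) : mu m ρ ∈ interior (simplex m) := by
  refine interior_maximal (t := hat ⁻¹' Set.univ.pi fun _ => Set.Ioi 0) ?_ ?_ ?_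
  · rw [simplex_eq_preimage_hat]
    exact fun l hl j => (hl j (Set.mem_univ j)).le
  · exact (isOpen_set_pi Set.finite_univ fun _ _ => isOpen_Ioi).preimage continuous_hat
  · exact fun j _ => hat_mu_pos ρ j

theorem bfun_eq_relEnt (l ρ : Fin m → ℝ) : bfun m l ρ = relEnt (hat l) (hat (mu m ρ)) := by
  simp only [relEnt, log_hat_mu, mul_sub, sum_sub_distrib, ← sum_mul, sum_hat]
  simp only [bfun, ent, mul_comm, Fin.sum_univ_succ, hat_zero, hat_succ, Fin.cons_zero, zero_mul,
    Fin.cons_succ, zero_add, one_mul]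
  ring

end Simplex

theorem B_strictMono_and_derivs_general (m : ℕ) (ρ : Fin m → ℝ)
    (x : Fin m → ℝ) (hx : x ∈ frontier (simplex m)) :
    StrictMonoOn (fun s => Bfun m s ρ x) (Set.Icc 0 1) ∧
    Bfun m 0 ρ x = 0 ∧
    deriv (fun s => Bfun m s ρ x) 0 = 0 ∧
    ∀ s ∈ Set.Ioo (0 : ℝ) 1, 0 < deriv (fun s' => Bfun m s' ρ x) s := by
  set p := hat (mu m ρ)
  set d : Fin (m + 1) → ℝ := fun j => hat x j - p j
  have hB (s : ℝ) : Bfun m s ρ x = relEnt (fun j => p j + s * d j) p := by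
    rw [Bfun, bfun_eq_relEnt, hat_line]
  have hp : ∀ j, 0 < p j := hat_mu_pos ρ
  have hpd : ∀ j, 0 ≤ p j + d j := by
    simpa [d, simplex_eq_preimage_hat, Pi.le_def] using isClosed_simplex.frontier_subset hx
  have hd0 : ∑ j, d j = 0 := by simp [d, sum_sub_distrib, sum_hat, p]
  have hd : d ≠ 0 := by
    intro h
    have hxμ : x = mu m ρ := funext fun i => by simpa [d, p, sub_eq_zero] using congrFun h i.succ
    exact hx.2 (hxμ ▸ mu_mem_interior_simplex ρ)
  have hderiv {s : ℝ} (hs : s ∈ Set.Ico (0 : ℝ) 1) :=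
    hasDerivAt_relEnt_line hd0 fun j => (add_mul_pos_of_mem_Ico hp hpd hs j).ne'
  simp only [hB]
  refine ⟨strictMonoOn_relEnt_line hp hpd hd0 hd, by simp, ?_, fun s hs => ?_⟩
  · simp [(hderiv ⟨le_rfl, one_pos⟩).deriv]
  · rw [(hderiv ⟨hs.1.le, hs.2⟩).deriv]
    exact sum_mul_log_line_sub_log_pos hp hs.1 (add_mul_pos_of_mem_Ico hp hpd ⟨hs.1.le, hs.2⟩) hd

/-- s ↦ B(s,ρ,x) is strictly increasing on [0,1], B(0,ρ,x) = 0,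
B_s(0,ρ,x) = 0, and B_s(s,ρ,x) > 0 for s ∈ (0,1). -/
theorem B_strictMono_and_derivs (m : ℕ) (hm : 1 ≤ m) (ρ : Fin m → ℝ)
    (x : Fin m → ℝ) (hx : x ∈ frontier (simplex m)) :
    StrictMonoOn (fun s => Bfun m s ρ x) (Set.Icc 0 1) ∧
    Bfun m 0 ρ x = 0 ∧
    deriv (fun s => Bfun m s ρ x) 0 = 0 ∧
    ∀ s ∈ Set.Ioo (0 : ℝ) 1, 0 < deriv (fun s' => Bfun m s' ρ x) s :=
  B_strictMono_and_derivs_general m ρ x hx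
end
end

section
/- For every ρ̃ ∈ ℝ^m and every x̃ ∈ ∂Δ, both B_s(s,ρ,x) → +∞ and B_ss(s,ρ,x) → +∞ as (s,ρ,x) → (1,ρ̃,x̃) with (s,ρ,x) ∈ (0,1) × ℝ^m × ∂Δ. -/
open MeasureTheory Real Filter Set

noncomputable section

/-!
Along the segment `s ↦ (1 - s) μ(ρ) + s x` every barycentric coordinate `λ_i(s)` (including
`λ_0`) is affine in `s`, so `B_s = Σ_{i=0}^m (x_i - μ_i) log λ_i(s) - ⟨ρ, x - μ(ρ)⟩` and
`B_ss = Σ_{i=0}^m (x_i - μ_i)² / λ_i(s)`. A point `x ∈ ∂Δ` has a vanishing coordinate `x_j = 0`,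
for which `λ_j(s) = (1 - s) μ_j`: its term contributes `-μ_j log (1 - s)` to `B_s` and
`μ_j / (1 - s)` to `B_ss`. Near `ρ̃` all `μ_i(ρ)` stay above a fixed `c > 0`, the remaining terms
of `B_s` are bounded below by `log c`, and those of `B_ss` are nonnegative.
-/

open Topology

section AffineSegment

variable {ι : Type*} [Fintype ι] {a b : ι → ℝ} {c s : ℝ}

lemma hasDerivAt_one_sub_mul_add_mul (a b s : ℝ) :
    HasDerivAt (fun s => (1 - s) * a + s * b) (b - a) s := by
  refine ((((hasDerivAt_id s).const_sub 1).mul_const a).add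
    ((hasDerivAt_id s).mul_const b)).congr_deriv ?_
  ring

theorem hasDerivAt_sum_mul_log_affine (hL : ∀ i, (1 - s) * a i + s * b i ≠ 0)
    (hab : ∑ i, a i = ∑ i, b i) :
    HasDerivAt (fun s => ∑ i, ((1 - s) * a i + s * b i) * log ((1 - s) * a i + s * b i))
      (∑ i, (b i - a i) * log ((1 - s) * a i + s * b i)) s := by
  have hsum : ∑ i, (b i - a i) = 0 := by rw [Finset.sum_sub_distrib, hab, sub_self]
  refine (HasDerivAt.fun_sum fun i _ => (hasDerivAt_mul_log (hL i)).comp s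
    (hasDerivAt_one_sub_mul_add_mul (a i) (b i) s)).congr_deriv ?_
  rw [← sub_eq_zero, ← Finset.sum_sub_distrib, ← hsum]
  exact Finset.sum_congr rfl fun i _ => by ring

theorem hasDerivAt_sum_sub_mul_log_affine (hL : ∀ i, (1 - s) * a i + s * b i ≠ 0) :
    HasDerivAt (fun s => ∑ i, (b i - a i) * log ((1 - s) * a i + s * b i))
      (∑ i, (b i - a i) ^ 2 / ((1 - s) * a i + s * b i)) s := by
  refine (HasDerivAt.fun_sum fun i _ => ((hasDerivAt_log (hL i)).comp s
    (hasDerivAt_one_sub_mul_add_mul (a i) (b i) s)).const_mul (b i - a i)).congr_deriv ?_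
  exact Finset.sum_congr rfl fun i _ => by ring

lemma log_le_sub_mul_log_affine {a b : ℝ} (hs0 : 0 ≤ s) (hs1 : s ≤ 1) (hc : 0 < c)
    (hca : c ≤ a) (ha : a ≤ 1) (hb0 : 0 ≤ b) (hb1 : b ≤ 1) :
    log c ≤ (b - a) * log ((1 - s) * a + s * b) := by
  have hL0 : 0 ≤ (1 - s) * a + s * b := by nlinarith
  have hL1 : (1 - s) * a + s * b ≤ 1 := by nlinarith
  have hlogL : log ((1 - s) * a + s * b) ≤ 0 := log_nonpos hL0 hL1
  rcases le_or_gt a b with hab | hab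
  · have hcL : log c ≤ log ((1 - s) * a + s * b) := log_le_log hc (by nlinarith)
    nlinarith
  · have hlogc : log c ≤ 0 := log_nonpos hc.le (hca.trans ha)
    nlinarith

lemma mul_neg_log_le_neg_mul_log_mul {a : ℝ} (hs0 : 0 ≤ s) (hs1 : s < 1) (hc : 0 < c)
    (hca : c ≤ a) (ha : a ≤ 1) :
    c * -log (1 - s) ≤ -a * log ((1 - s) * a) := by
  have h1s : 0 < 1 - s := by linarith
  have hlog1s : log (1 - s) ≤ 0 := log_nonpos h1s.le (by linarith)
  have hloga : log a ≤ 0 := log_nonpos (hc.trans_le hca).le ha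
  rw [log_mul h1s.ne' (hc.trans_le hca).ne']
  nlinarith

theorem le_sum_sub_mul_log_affine (hs0 : 0 ≤ s) (hs1 : s < 1) (hc : 0 < c)
    (hca : ∀ i, c ≤ a i) (ha : ∀ i, a i ≤ 1) (hb0 : ∀ i, 0 ≤ b i) (hb1 : ∀ i, b i ≤ 1)
    {j : ι} (hj : b j = 0) :
    c * -log (1 - s) + ((Fintype.card ι : ℝ) - 1) * log c ≤
      ∑ i, (b i - a i) * log ((1 - s) * a i + s * b i) := by
  classical
  rw [← Finset.add_sum_erase _ _ (Finset.mem_univ j)]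
  have hterm_j : c * -log (1 - s) ≤ (b j - a j) * log ((1 - s) * a j + s * b j) := by
    simpa [hj] using mul_neg_log_le_neg_mul_log_mul hs0 hs1 hc (hca j) (ha j)
  have hrest := Finset.card_nsmul_le_sum (Finset.univ.erase j) _ (log c) fun i _ =>
    log_le_sub_mul_log_affine hs0 hs1.le hc (hca i) (ha i) (hb0 i) (hb1 i)
  rw [Finset.card_erase_of_mem (Finset.mem_univ j), Finset.card_univ, nsmul_eq_mul,
    Nat.cast_pred (Fintype.card_pos_iff.2 ⟨j⟩)] at hrest
  linarith

theorem div_le_sum_sq_div_affine (hs0 : 0 ≤ s) (hs1 : s < 1) (ha : ∀ i, 0 ≤ a i)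
    (hb : ∀ i, 0 ≤ b i) {j : ι} (hc : 0 < c) (hca : c ≤ a j) (hj : b j = 0) :
    c / (1 - s) ≤ ∑ i, (b i - a i) ^ 2 / ((1 - s) * a i + s * b i) := by
  have h1s : 0 < 1 - s := by linarith
  calc c / (1 - s) ≤ a j / (1 - s) := div_le_div_of_nonneg_right hca h1s.le
    _ = (b j - a j) ^ 2 / ((1 - s) * a j + s * b j) := by
      rw [hj]; field_simp [(hc.trans_le hca).ne']; ring
    _ ≤ ∑ i, (b i - a i) ^ 2 / ((1 - s) * a i + s * b i) :=
      Finset.single_le_sum (f := fun i => (b i - a i) ^ 2 / ((1 - s) * a i + s * b i))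
        (fun i _ => div_nonneg (sq_nonneg _)
        (add_nonneg (mul_nonneg h1s.le (ha i)) (mul_nonneg hs0 (hb i)))) (Finset.mem_univ j)

end AffineSegment

theorem exists_pos_eventually_forall_le {X ι : Type*} [TopologicalSpace X] [Finite ι]
    {f : X → ι → ℝ} {x₀ : X} (hf : ContinuousAt f x₀) (hpos : ∀ i, 0 < f x₀ i) :
    ∃ c > 0, ∀ᶠ x in 𝓝 x₀, ∀ i, c ≤ f x i := by
  obtain ⟨c, hlt, hc⟩ := ((eventually_all.2 fun i => eventually_lt_nhds (hpos i)).filter_mono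
    nhdsWithin_le_nhds |>.and (self_mem_nhdsWithin : ∀ᶠ c in 𝓝[>] (0 : ℝ), c ∈ Ioi 0)).exists
  refine ⟨c, hc, eventually_all.2 fun i => ?_⟩
  exact (((continuous_apply i).continuousAt.tendsto.comp hf).eventually
    (eventually_gt_nhds (hlt i))).mono fun x hx => hx.le

namespace UnitSimplex

variable {m : ℕ}

/-- The paper's `λ̂ = (λ_0, λ_1, …, λ_m)`, with `λ_0 = 1 - Σ λ_i` at index `0`. -/
def augment (x : Fin m → ℝ) : Fin (m + 1) → ℝ :=
  Fin.cons (1 - ∑ i, x i) x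

lemma sum_augment (x : Fin m → ℝ) : ∑ i, augment x i = 1 := by
  simp [augment, Fin.sum_univ_succ]

lemma augment_affine (a b : Fin m → ℝ) (s : ℝ) (i : Fin (m + 1)) :
    augment (fun i => (1 - s) * a i + s * b i) i = (1 - s) * augment a i + s * augment b i := by
  cases i using Fin.cases with
  | zero => simp only [augment, Fin.cons_zero, Finset.sum_add_distrib, ← Finset.mul_sum]; ring
  | succ i => simp [augment]

lemma ent_eq_sum_augment (x : Fin m → ℝ) :
    ent m x = ∑ i, augment x i * log (augment x i) := by
  simp [ent, augment, Fin.sum_univ_succ]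

lemma continuous_augment : Continuous (augment : (Fin m → ℝ) → Fin (m + 1) → ℝ) :=
  Continuous.finCons (A := fun _ => ℝ) (by fun_prop) continuous_id

lemma mem_simplex_iff_augment {x : Fin m → ℝ} : x ∈ simplex m ↔ ∀ i, 0 ≤ augment x i := by
  simp [simplex, augment, Fin.forall_fin_succ, and_comm]

lemma augment_le_one {x : Fin m → ℝ} (hx : x ∈ simplex m) (i : Fin (m + 1)) :
    augment x i ≤ 1 :=
  (Finset.single_le_sum (fun j _ => mem_simplex_iff_augment.1 hx j) (Finset.mem_univ i)).trans_eq
    (sum_augment x)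

lemma isClosed_simplex : IsClosed (simplex m) := by
  rw [show simplex m = ⋂ i, {x | 0 ≤ augment x i} by ext; simp [mem_simplex_iff_augment]]
  exact isClosed_iInter fun i => isClosed_le continuous_const
    ((continuous_apply i).comp continuous_augment)

lemma exists_augment_eq_zero {x : Fin m → ℝ} (hx : x ∈ frontier (simplex m)) :
    ∃ i, augment x i = 0 := by
  have hopen : IsOpen (⋂ i, {x : Fin m → ℝ | 0 < augment x i}) :=
    isOpen_iInter_of_finite fun i => isOpen_lt continuous_const
      ((continuous_apply i).comp continuous_augment)
  have hx_mem : x ∈ simplex m := isClosed_simplex.frontier_subset hx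
  have hx_not : ¬ ∀ i, 0 < augment x i := fun h =>
    hx.2 (interior_maximal (fun y hy => mem_simplex_iff_augment.2 fun i => (mem_iInter.1 hy i).le)
      hopen (mem_iInter.2 h))
  obtain ⟨i, hi⟩ := not_forall.1 hx_not
  exact ⟨i, le_antisymm (not_lt.1 hi) (mem_simplex_iff_augment.1 hx_mem i)⟩

lemma augment_mu_pos (ρ : Fin m → ℝ) (i : Fin (m + 1)) : 0 < augment (mu m ρ) i := by
  have hden : 0 < 1 + ∑ j, exp (ρ j) := by positivity
  cases i using Fin.cases with
  | zero =>
    simp only [augment, Fin.cons_zero, mu, ← Finset.sum_div, sub_pos, div_lt_one hden]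
    linarith
  | succ i => exact div_pos (exp_pos _) hden

lemma mu_mem_simplex (ρ : Fin m → ℝ) : mu m ρ ∈ simplex m :=
  mem_simplex_iff_augment.2 fun i => (augment_mu_pos ρ i).le

@[fun_prop]
lemma continuous_mu : Continuous (mu m) :=
  continuous_pi fun i => (continuous_exp.comp (continuous_apply i)).div
    (continuous_const.add (continuous_finsetSum _ fun j _ =>
      continuous_exp.comp (continuous_apply j)))
    fun ρ => by positivity

lemma Bfun_eq (s : ℝ) (ρ x : Fin m → ℝ) :
    Bfun m s ρ x = log (1 + ∑ i, exp (ρ i)) +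
      ∑ i, ((1 - s) * augment (mu m ρ) i + s * augment x i) *
        log ((1 - s) * augment (mu m ρ) i + s * augment x i) -
      ∑ i, ρ i * ((1 - s) * mu m ρ i + s * x i) := by
  simp only [Bfun, bfun, ent_eq_sum_augment, augment_affine]

lemma affine_augment_pos (ρ : Fin m → ℝ) {x : Fin m → ℝ} (hx : x ∈ simplex m) {s : ℝ}
    (hs0 : 0 ≤ s) (hs1 : s < 1) (i : Fin (m + 1)) :
    0 < (1 - s) * augment (mu m ρ) i + s * augment x i :=
  add_pos_of_pos_of_nonneg (mul_pos (sub_pos.2 hs1) (augment_mu_pos ρ i))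
    (mul_nonneg hs0 (mem_simplex_iff_augment.1 hx i))

theorem hasDerivAt_Bfun (ρ : Fin m → ℝ) {x : Fin m → ℝ} (hx : x ∈ simplex m) {s : ℝ}
    (hs0 : 0 ≤ s) (hs1 : s < 1) :
    HasDerivAt (fun s => Bfun m s ρ x)
      (∑ i, (augment x i - augment (mu m ρ) i) *
          log ((1 - s) * augment (mu m ρ) i + s * augment x i) -
        ∑ i, ρ i * (x i - mu m ρ i)) s := by
  simp only [Bfun_eq]
  have hentropy := hasDerivAt_sum_mul_log_affine
    (fun i => (affine_augment_pos ρ hx hs0 hs1 i).ne') (by rw [sum_augment, sum_augment])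
  have hlinear := HasDerivAt.fun_sum fun i (_ : i ∈ Finset.univ) =>
    (hasDerivAt_one_sub_mul_add_mul (mu m ρ i) (x i) s).const_mul (ρ i)
  refine (((hasDerivAt_const _ _).add hentropy).sub hlinear).congr_deriv ?_
  rw [zero_add]

theorem deriv_deriv_Bfun (ρ : Fin m → ℝ) {x : Fin m → ℝ} (hx : x ∈ simplex m) {s : ℝ}
    (hs0 : 0 < s) (hs1 : s < 1) :
    deriv (deriv fun s => Bfun m s ρ x) s =
      ∑ i, (augment x i - augment (mu m ρ) i) ^ 2 /
        ((1 - s) * augment (mu m ρ) i + s * augment x i) := by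
  rw [(eventuallyEq_of_mem (Ioo_mem_nhds hs0 hs1) fun t ht =>
    (hasDerivAt_Bfun ρ hx ht.1.le ht.2).deriv).deriv_eq]
  exact ((hasDerivAt_sum_sub_mul_log_affine
    fun i => (affine_augment_pos ρ hx hs0.le hs1 i).ne').sub_const _).deriv

theorem le_deriv_Bfun {ρ x : Fin m → ℝ} (hx : x ∈ frontier (simplex m)) {c s : ℝ}
    (hs : s ∈ Ioo 0 1) (hc : 0 < c) (hcμ : ∀ i, c ≤ augment (mu m ρ) i) :
    c * -log (1 - s) + m * log c - ∑ i, ρ i * (x i - mu m ρ i) ≤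
      deriv (fun s => Bfun m s ρ x) s := by
  obtain ⟨j, hj⟩ := exists_augment_eq_zero hx
  have hx' := isClosed_simplex.frontier_subset hx
  have h := le_sum_sub_mul_log_affine hs.1.le hs.2 hc hcμ (augment_le_one (mu_mem_simplex ρ))
    (mem_simplex_iff_augment.1 hx') (augment_le_one hx') hj
  rw [Fintype.card_fin, Nat.cast_add_one, add_sub_cancel_right] at h
  rw [(hasDerivAt_Bfun ρ hx' hs.1.le hs.2).deriv]
  linarith

theorem div_le_deriv_deriv_Bfun {ρ x : Fin m → ℝ} (hx : x ∈ frontier (simplex m)) {c s : ℝ}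
    (hs : s ∈ Ioo 0 1) (hc : 0 < c) (hcμ : ∀ i, c ≤ augment (mu m ρ) i) :
    c / (1 - s) ≤ deriv (deriv fun s => Bfun m s ρ x) s := by
  obtain ⟨j, hj⟩ := exists_augment_eq_zero hx
  have hx' := isClosed_simplex.frontier_subset hx
  rw [deriv_deriv_Bfun ρ hx' hs.1 hs.2]
  exact div_le_sum_sq_div_affine hs.1.le hs.2 (fun i => (augment_mu_pos ρ i).le)
    (mem_simplex_iff_augment.1 hx') hc (hcμ j) hj

end UnitSimplex

open UnitSimplex in
theorem B_s_B_ss_tendsto_atTop_general (m : ℕ) (ρt : Fin m → ℝ)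
    (xt : Fin m → ℝ) :
    Filter.Tendsto (fun q : ℝ × (Fin m → ℝ) × (Fin m → ℝ) =>
        deriv (fun s => Bfun m s q.2.1 q.2.2) q.1)
      (nhdsWithin (1, ρt, xt)
        (Set.Ioo (0 : ℝ) 1 ×ˢ ((Set.univ : Set (Fin m → ℝ)) ×ˢ frontier (simplex m))))
      Filter.atTop ∧
    Filter.Tendsto (fun q : ℝ × (Fin m → ℝ) × (Fin m → ℝ) =>
        deriv (deriv (fun s => Bfun m s q.2.1 q.2.2)) q.1)
      (nhdsWithin (1, ρt, xt)
        (Set.Ioo (0 : ℝ) 1 ×ˢ ((Set.univ : Set (Fin m → ℝ)) ×ˢ frontier (simplex m))))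
      Filter.atTop := by
  set F := 𝓝[Ioo (0 : ℝ) 1 ×ˢ ((univ : Set (Fin m → ℝ)) ×ˢ frontier (simplex m))] (1, ρt, xt)
  obtain ⟨c, hc, hcμ⟩ := exists_pos_eventually_forall_le
    (continuous_augment.comp continuous_mu).continuousAt (augment_mu_pos ρt)
  have hq : ∀ᶠ q in F, q.1 ∈ Ioo 0 1 ∧ q.2.2 ∈ frontier (simplex m) ∧
      ∀ i, c ≤ augment (mu m q.2.1) i :=
    (eventually_mem_nhdsWithin.and
      ((continuous_fst.comp continuous_snd).continuousWithinAt.eventually hcμ)).mono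
        fun q ⟨hS, h⟩ => ⟨hS.1, hS.2.2, h⟩
  have h1s : Tendsto (fun q : ℝ × (Fin m → ℝ) × (Fin m → ℝ) => 1 - q.1) F (𝓝[>] 0) :=
    tendsto_nhdsWithin_iff.2
      ⟨((continuous_const.sub continuous_fst).tendsto' _ _ (sub_self 1)).mono_left
        nhdsWithin_le_nhds, hq.mono fun q h => sub_pos.2 h.1.2⟩
  have hρx : Tendsto (fun q : ℝ × (Fin m → ℝ) × (Fin m → ℝ) =>
      ∑ i, q.2.1 i * (q.2.2 i - mu m q.2.1 i)) F (𝓝 (∑ i, ρt i * (xt i - mu m ρt i))) :=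
    Continuous.continuousWithinAt (by fun_prop)
  constructor
  · refine tendsto_atTop_mono' F ?_ ((((tendsto_neg_atBot_atTop.comp
      (tendsto_log_nhdsGT_zero.comp h1s)).const_mul_atTop hc).atTop_add
        (tendsto_const_nhds (x := m * log c))).atTop_add hρx.neg)
    filter_upwards [hq] with q ⟨hs, hx, hcμ⟩
    simpa only [Function.comp_apply, sub_eq_add_neg] using le_deriv_Bfun hx hs hc hcμ
  · refine tendsto_atTop_mono' F ?_ ((tendsto_inv_nhdsGT_zero.comp h1s).const_mul_atTop hc)
    filter_upwards [hq] with q ⟨hs, hx, hcμ⟩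
    simpa only [Function.comp_apply, div_eq_mul_inv] using div_le_deriv_deriv_Bfun hx hs hc hcμ

/-- B_s → +∞ and B_ss → +∞ as (s,ρ,x) → (1,ρ̃,x̃) in (0,1) × ℝ^m × ∂Δ. -/
theorem B_s_B_ss_tendsto_atTop (m : ℕ) (hm : 1 ≤ m) (ρt : Fin m → ℝ)
    (xt : Fin m → ℝ) (hxt : xt ∈ frontier (simplex m)) :
    Filter.Tendsto (fun q : ℝ × (Fin m → ℝ) × (Fin m → ℝ) =>
        deriv (fun s => Bfun m s q.2.1 q.2.2) q.1)
      (nhdsWithin (1, ρt, xt)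
        (Set.Ioo (0 : ℝ) 1 ×ˢ ((Set.univ : Set (Fin m → ℝ)) ×ˢ frontier (simplex m))))
      Filter.atTop ∧
    Filter.Tendsto (fun q : ℝ × (Fin m → ℝ) × (Fin m → ℝ) =>
        deriv (deriv (fun s => Bfun m s q.2.1 q.2.2)) q.1)
      (nhdsWithin (1, ρt, xt)
        (Set.Ioo (0 : ℝ) 1 ×ˢ ((Set.univ : Set (Fin m → ℝ)) ×ˢ frontier (simplex m))))
      Filter.atTop :=
  B_s_B_ss_tendsto_atTop_general m ρt xt
end
end

section
/- The function D is continuous on [0,∞) × ℝ^m. -/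
open MeasureTheory Real Filter Set

noncomputable section

/-!
Write `A(t, ρ) = {λ ∈ Δ | b(λ, ρ) ≤ t}`. Moving `ρ` changes `b(·, ρ)` by at most some `δ(ρ) → 0`
uniformly on `Δ`, so `A(t - δ, ρ₀) ⊆ A(t, ρ) ⊆ A(t + δ, ρ₀)` and it suffices that
`t ↦ vol A(t, ρ₀)` is continuous. Right continuity is continuity of measure along decreasing
intersections. For left continuity, `b(·, ρ)` is convex with minimum `0` at `μ(ρ)`, so the
homothety of ratio `s ∈ [0, 1]` about `μ(ρ)` maps `A(t)` into `A(s t)`, whence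
`vol A(s t) ≥ s ^ m vol A(t)`; at `t = 0`, strict convexity makes `A(0) = {μ(ρ)}` a null set.
-/

open scoped Topology

section

variable {m : ℕ}

lemma convex_simplex : Convex ℝ (simplex m) := by
  intro x hx y hy a b ha hb hab
  refine ⟨fun i => ?_, ?_⟩
  · have := hx.1 i; have := hy.1 i
    simp only [Pi.add_apply, Pi.smul_apply, smul_eq_mul]
    positivity
  · simp only [Pi.add_apply, Pi.smul_apply, smul_eq_mul, Finset.sum_add_distrib,
      ← Finset.mul_sum]
    nlinarith [hx.2, hy.2]

lemma simplex_subset_Icc : simplex m ⊆ Icc 0 1 := fun _ hl =>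
  ⟨hl.1, fun i => (Finset.single_le_sum (fun j _ => hl.1 j) (Finset.mem_univ i)).trans hl.2⟩

lemma mu_pos (ρ : Fin m → ℝ) (i : Fin m) : 0 < mu m ρ i := by
  unfold mu; positivity

lemma one_sub_sum_mu (ρ : Fin m → ℝ) : 1 - ∑ i, mu m ρ i = (1 + ∑ i, exp (ρ i))⁻¹ := by
  have : 0 < 1 + ∑ i, exp (ρ i) := by positivity
  simp only [mu, ← Finset.sum_div]
  field_simp
  ring

lemma mu_mem_simplex (ρ : Fin m → ℝ) : mu m ρ ∈ simplex m := by
  refine ⟨fun i => (mu_pos ρ i).le, ?_⟩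
  have : 0 < (1 + ∑ i, exp (ρ i))⁻¹ := by positivity
  linarith [one_sub_sum_mu ρ]

lemma log_mu (ρ : Fin m → ℝ) (i : Fin m) : log (mu m ρ i) = ρ i - log (1 + ∑ j, exp (ρ j)) := by
  rw [mu, log_div (exp_ne_zero _) (by positivity), log_exp]

lemma sub_le_mul_log_sub_mul_log {x y : ℝ} (hx : 0 ≤ x) (hy : 0 < y) :
    x - y ≤ x * log x - x * log y := by
  rcases hx.eq_or_lt with rfl | hx
  · simpa using hy.le
  · have h := mul_le_mul_of_nonneg_left (one_sub_inv_le_log_of_pos (div_pos hx hy)) hx.le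
    rw [log_div hx.ne' hy.ne', inv_div, mul_sub, mul_one, mul_div_cancel₀ _ hx.ne'] at h
    linarith

lemma bfun_eq_relEntropy (l ρ : Fin m → ℝ) :
    bfun m l ρ = ((1 - ∑ i, l i) * log (1 - ∑ i, l i)
        - (1 - ∑ i, l i) * log (1 - ∑ i, mu m ρ i))
      + ∑ i, (l i * log (l i) - l i * log (mu m ρ i)) := by
  simp only [bfun, ent, one_sub_sum_mu, log_inv, log_mu, Finset.sum_sub_distrib, mul_sub]
  rw [← Finset.sum_mul]
  simp only [mul_comm (ρ _)]
  ring

lemma bfun_nonneg (ρ : Fin m → ℝ) {l : Fin m → ℝ} (hl : l ∈ simplex m) : 0 ≤ bfun m l ρ := by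
  have h₀ := sub_le_mul_log_sub_mul_log (sub_nonneg.2 hl.2)
    (show 0 < 1 - ∑ i, mu m ρ i by rw [one_sub_sum_mu]; positivity)
  have h := Finset.sum_le_sum fun i (_ : i ∈ Finset.univ) =>
    sub_le_mul_log_sub_mul_log (hl.1 i) (mu_pos ρ i)
  rw [Finset.sum_sub_distrib] at h
  rw [bfun_eq_relEntropy]
  linarith

lemma bfun_mu (ρ : Fin m → ℝ) : bfun m (mu m ρ) ρ = 0 := by
  simp [bfun_eq_relEntropy]

lemma StrictConvexOn.sum_comp_apply {ι : Type*} [Fintype ι] {s : Set ℝ} {f : ℝ → ℝ}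
    (hf : StrictConvexOn ℝ s f) :
    StrictConvexOn ℝ (univ.pi fun _ : ι => s) (fun x => ∑ i, f (x i)) := by
  refine ⟨convex_pi fun i _ => hf.1, fun x hx y hy hxy a b ha hb hab => ?_⟩
  obtain ⟨i₀, hi₀⟩ := Function.ne_iff.1 hxy
  simp only [mem_univ_pi] at hx hy
  have hle : ∀ i ∈ Finset.univ, f (a * x i + b * y i) ≤ a * f (x i) + b * f (y i) :=
    fun i _ => hf.convexOn.2 (hx i) (hy i) ha.le hb.le hab
  have hlt := hf.2 (hx i₀) (hy i₀) hi₀ ha hb hab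
  calc ∑ i, f ((a • x + b • y) i) < ∑ i, (a * f (x i) + b * f (y i)) :=
        Finset.sum_lt_sum hle ⟨i₀, Finset.mem_univ _, hlt⟩
    _ = a • ∑ i, f (x i) + b • ∑ i, f (y i) := by
        simp only [Finset.sum_add_distrib, Finset.mul_sum, smul_eq_mul]

lemma convexOn_mul_log_one_sub_sum :
    ConvexOn ℝ (simplex m) (fun l => (1 - ∑ i, l i) * log (1 - ∑ i, l i)) := by
  refine ⟨convex_simplex, fun x hx y hy a b ha hb hab => ?_⟩
  have hsum : 1 - ∑ i, (a • x + b • y) i = a * (1 - ∑ i, x i) + b * (1 - ∑ i, y i) := by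
    simp only [Pi.add_apply, Pi.smul_apply, smul_eq_mul, Finset.sum_add_distrib,
      ← Finset.mul_sum]
    linear_combination -hab
  simpa only [hsum, smul_eq_mul] using
    convexOn_mul_log.2 (sub_nonneg.2 hx.2) (sub_nonneg.2 hy.2) ha hb hab

lemma strictConvexOn_ent : StrictConvexOn ℝ (simplex m) (ent m) :=
  convexOn_mul_log_one_sub_sum.add_strictConvexOn
    (strictConvexOn_mul_log.sum_comp_apply.subset (fun _ hl => mem_univ_pi.2 hl.1) convex_simplex)

lemma strictConvexOn_bfun (ρ : Fin m → ℝ) :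
    StrictConvexOn ℝ (simplex m) (fun l => bfun m l ρ) := by
  have hlin : ConcaveOn ℝ (simplex m) (fun l => ∑ i, ρ i * l i) :=
    ((∑ i, ρ i • LinearMap.proj (R := ℝ) (φ := fun _ : Fin m => ℝ) i).concaveOn
      convex_simplex).congr fun l _ => by simp
  exact ((convexOn_const _ convex_simplex).add_strictConvexOn strictConvexOn_ent).sub_concaveOn hlin

def bSublevel (m : ℕ) (t : ℝ) (ρ : Fin m → ℝ) : Set (Fin m → ℝ) :=
  {l ∈ simplex m | bfun m l ρ ≤ t}

lemma measurableSet_bSublevel (t : ℝ) (ρ : Fin m → ℝ) : MeasurableSet (bSublevel m t ρ) := by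
  unfold bSublevel simplex bfun ent
  measurability

lemma volume_bSublevel_ne_top (t : ℝ) (ρ : Fin m → ℝ) : volume (bSublevel m t ρ) ≠ ⊤ :=
  ((Metric.isBounded_Icc 0 1).subset ((sep_subset _ _).trans simplex_subset_Icc)).measure_lt_top.ne

lemma bSublevel_mono (ρ : Fin m → ℝ) : Monotone fun t => bSublevel m t ρ :=
  fun _ _ h _ hl => ⟨hl.1, hl.2.trans h⟩

lemma bSublevel_zero_subsingleton (ρ : Fin m → ℝ) : (bSublevel m 0 ρ).Subsingleton :=
  fun _ hl _ hl' => (strictConvexOn_bfun ρ).eq_of_isMinOn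
    (fun _ hl'' => hl.2.trans (bfun_nonneg ρ hl'')) (fun _ hl'' => hl'.2.trans (bfun_nonneg ρ hl''))
    hl.1 hl'.1

lemma volume_bSublevel_zero (hm : 1 ≤ m) (ρ : Fin m → ℝ) : volume (bSublevel m 0 ρ) = 0 :=
  have : Nonempty (Fin m) := ⟨⟨0, hm⟩⟩
  (bSublevel_zero_subsingleton ρ).measure_zero _

lemma monotone_volume_real_bSublevel (ρ : Fin m → ℝ) :
    Monotone fun t => volume.real (bSublevel m t ρ) :=
  fun _ _ h => measureReal_mono (bSublevel_mono ρ h) (volume_bSublevel_ne_top _ _)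

lemma pow_mul_volume_real_bSublevel_le (ρ : Fin m → ℝ) {s : ℝ} (hs₀ : 0 ≤ s) (hs₁ : s ≤ 1)
    (t : ℝ) : s ^ m * volume.real (bSublevel m t ρ) ≤ volume.real (bSublevel m (s * t) ρ) := by
  have himage : AffineMap.homothety (mu m ρ) s '' bSublevel m t ρ ⊆ bSublevel m (s * t) ρ := by
    rintro _ ⟨l, hl, rfl⟩
    have hcomb : AffineMap.homothety (mu m ρ) s l = (1 - s) • mu m ρ + s • l := by
      rw [AffineMap.homothety_apply, vsub_eq_sub, vadd_eq_add]; module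
    have hb := (strictConvexOn_bfun ρ).convexOn.2 (mu_mem_simplex ρ) hl.1 (sub_nonneg.2 hs₁) hs₀
      (sub_add_cancel 1 s)
    simp only [bfun_mu, smul_eq_mul, mul_zero, zero_add] at hb
    rw [hcomb]
    exact ⟨convex_simplex (mu_mem_simplex ρ) hl.1 (sub_nonneg.2 hs₁) hs₀ (sub_add_cancel 1 s),
      hb.trans (mul_le_mul_of_nonneg_left hl.2 hs₀)⟩
  calc s ^ m * volume.real (bSublevel m t ρ)
      = volume.real (AffineMap.homothety (mu m ρ) s '' bSublevel m t ρ) := by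
        rw [measureReal_def, measureReal_def, Measure.addHaar_image_homothety, ENNReal.toReal_mul,
          ENNReal.toReal_ofReal (abs_nonneg _), abs_of_nonneg (pow_nonneg hs₀ _),
          Module.finrank_fin_fun]
    _ ≤ _ := measureReal_mono himage (volume_bSublevel_ne_top _ _)

lemma continuousWithinAt_Ici_volume_real_bSublevel (ρ : Fin m → ℝ) (t₀ : ℝ) :
    ContinuousWithinAt (fun t => volume.real (bSublevel m t ρ)) (Ici t₀) t₀ := by
  have hinter : ⋂ r > t₀, bSublevel m r ρ = bSublevel m t₀ ρ := by
    ext l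
    simp only [mem_iInter₂, bSublevel, mem_sep_iff]
    exact ⟨fun h => ⟨(h _ (lt_add_one t₀)).1,
      le_of_forall_gt_imp_ge_of_dense fun r hr => (h r hr).2⟩, fun h r hr => ⟨h.1, h.2.trans hr.le⟩⟩
  have h := tendsto_measure_biInter_gt (μ := volume)
    (fun r _ => (measurableSet_bSublevel r ρ).nullMeasurableSet)
    (fun _ _ _ hij => bSublevel_mono ρ hij) ⟨t₀ + 1, lt_add_one t₀, volume_bSublevel_ne_top _ _⟩
  rw [hinter] at h
  exact continuousWithinAt_Ioi_iff_Ici.1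
    ((ENNReal.tendsto_toReal (volume_bSublevel_ne_top _ _)).comp h)

lemma continuousWithinAt_Iic_volume_real_bSublevel (hm : 1 ≤ m) (ρ : Fin m → ℝ) (t₀ : ℝ) :
    ContinuousWithinAt (fun t => volume.real (bSublevel m t ρ)) (Iic t₀) t₀ := by
  rcases le_or_gt t₀ 0 with ht₀ | ht₀
  · have hzero : ∀ t ≤ 0, volume.real (bSublevel m t ρ) = 0 := fun t ht =>
      measureReal_mono_null (bSublevel_mono ρ ht)
        (by simp [measureReal_def, volume_bSublevel_zero hm]) (volume_bSublevel_ne_top _ _)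
    exact continuousWithinAt_const.congr (fun t ht => hzero t (le_trans ht ht₀)) (hzero t₀ ht₀)
  · have hlower : Tendsto (fun t => (t / t₀) ^ m * volume.real (bSublevel m t₀ ρ)) (𝓝[≤] t₀)
        (𝓝 (volume.real (bSublevel m t₀ ρ))) := by
      have h : Continuous fun t => (t / t₀) ^ m * volume.real (bSublevel m t₀ ρ) := by fun_prop
      simpa [div_self ht₀.ne'] using (h.tendsto t₀).mono_left nhdsWithin_le_nhds
    refine tendsto_of_tendsto_of_tendsto_of_le_of_le' hlower tendsto_const_nhds ?_ ?_
    · filter_upwards [Ioc_mem_nhdsLE ht₀] with t ht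
      have h := pow_mul_volume_real_bSublevel_le ρ (div_nonneg ht.1.le ht₀.le)
        (div_le_one_of_le₀ ht.2 ht₀.le) t₀
      rwa [div_mul_cancel₀ _ ht₀.ne'] at h
    · filter_upwards [self_mem_nhdsWithin] with t ht
      exact monotone_volume_real_bSublevel ρ ht

lemma continuous_volume_real_bSublevel (hm : 1 ≤ m) (ρ : Fin m → ℝ) :
    Continuous fun t => volume.real (bSublevel m t ρ) :=
  continuous_iff_continuousAt.2 fun t₀ => continuousAt_iff_continuous_left_right.2
    ⟨continuousWithinAt_Iic_volume_real_bSublevel hm ρ t₀,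
      continuousWithinAt_Ici_volume_real_bSublevel ρ t₀⟩

lemma abs_bfun_sub_bfun_le {l : Fin m → ℝ} (hl : l ∈ simplex m) (ρ ρ₀ : Fin m → ℝ) :
    |bfun m l ρ - bfun m l ρ₀| ≤
      |log (1 + ∑ i, exp (ρ i)) - log (1 + ∑ i, exp (ρ₀ i))| + ∑ i, |ρ i - ρ₀ i| := by
  have hdiff : bfun m l ρ - bfun m l ρ₀ = (log (1 + ∑ i, exp (ρ i)) - log (1 + ∑ i, exp (ρ₀ i)))
      - ∑ i, (ρ i - ρ₀ i) * l i := by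
    simp only [bfun, sub_mul, Finset.sum_sub_distrib]
    ring
  have hlin : |∑ i, (ρ i - ρ₀ i) * l i| ≤ ∑ i, |ρ i - ρ₀ i| :=
    (Finset.abs_sum_le_sum_abs _ _).trans <| Finset.sum_le_sum fun i _ => by
      rw [abs_mul]
      exact mul_le_of_le_one_right (abs_nonneg _)
        (abs_le.2 ⟨by linarith [hl.1 i], (simplex_subset_Icc hl).2 i⟩)
  rw [hdiff]
  exact (abs_sub _ _).trans (by gcongr)

lemma Dfun_le_Dfun {ρ ρ' : Fin m → ℝ} {t t' : ℝ}
    (h : ∀ l ∈ simplex m, bfun m l ρ' - t' ≤ bfun m l ρ - t) : Dfun m t ρ ≤ Dfun m t' ρ' :=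
  mul_le_mul_of_nonneg_left (measureReal_mono (fun l hl => ⟨hl.1, by linarith [h l hl.1, hl.2]⟩)
    (volume_bSublevel_ne_top t' ρ')) (by positivity)

theorem continuous_Dfun (hm : 1 ≤ m) : Continuous fun q : ℝ × (Fin m → ℝ) => Dfun m q.1 q.2 := by
  refine continuous_iff_continuousAt.2 fun ⟨t₀, ρ₀⟩ => ?_
  set δ := fun ρ : Fin m → ℝ =>
    |log (1 + ∑ i, exp (ρ i)) - log (1 + ∑ i, exp (ρ₀ i))| + ∑ i, |ρ i - ρ₀ i|
  have hD : Continuous fun t => Dfun m t ρ₀ := (continuous_volume_real_bSublevel hm ρ₀).const_mul _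
  have hδ : Continuous δ := by fun_prop (disch := exact fun _ => by positivity)
  have hδ₀ : δ ρ₀ = 0 := by simp [δ]
  have hlim (σ : ℝ) : Tendsto (fun q : ℝ × (Fin m → ℝ) => Dfun m (q.1 + σ * δ q.2) ρ₀)
      (𝓝 (t₀, ρ₀)) (𝓝 (Dfun m t₀ ρ₀)) := by
    have hcont : Continuous fun q : ℝ × (Fin m → ℝ) => q.1 + σ * δ q.2 := by fun_prop
    exact (hD.tendsto t₀).comp (by simpa [hδ₀] using hcont.tendsto (t₀, ρ₀))
  refine tendsto_of_tendsto_of_tendsto_of_le_of_le (hlim (-1)) (hlim 1)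
    (fun q => Dfun_le_Dfun fun l hl => ?_) (fun q => Dfun_le_Dfun fun l hl => ?_) <;>
  · have := abs_le.1 (abs_bfun_sub_bfun_le hl q.2 ρ₀)
    linarith

end

/-- D is continuous on [0,∞) × ℝ^m. -/
theorem D_continuousOn (m : ℕ) (hm : 1 ≤ m) :
    ContinuousOn (fun q : ℝ × (Fin m → ℝ) => Dfun m q.1 q.2)
      (Set.Ici (0 : ℝ) ×ˢ (Set.univ : Set (Fin m → ℝ))) :=
  (continuous_Dfun hm).continuousOn
end
end

section
/- Fix ρ ∈ ℝ and x ∈ {0,1}. Then there exists δ > 0 such that for every s ∈ (0,δ] there exists s̃(s) ∈ [0,1] with B(s,ρ,x) = B(s̃(s),ρ,1−x); moreover, lim_{s→0⁺} s̃(s)/s = e^{ρ} if x = 0, and lim_{s→0⁺} s̃(s)/s = e^{−ρ} if x = 1. -/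
open MeasureTheory Real Filter Set

noncomputable section

/-- m = 1: μ(ρ) = e^ρ/(1+e^ρ). -/
def mu1 (ρ : ℝ) : ℝ := Real.exp ρ / (1 + Real.exp ρ)

/-- m = 1: b(λ,ρ) = λ log λ + (1−λ) log(1−λ) − λρ + log(1+e^ρ).
Note `Real.log 0 = 0`, so the convention 0·log 0 = 0 holds. -/
def b1 (l ρ : ℝ) : ℝ :=
  l * Real.log l + (1 - l) * Real.log (1 - l) - l * ρ + Real.log (1 + Real.exp ρ)

/-- m = 1: B(s,ρ,x) = b((1−s)μ(ρ) + s x, ρ). -/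
def B1 (s ρ x : ℝ) : ℝ := b1 ((1 - s) * mu1 ρ + s * x) ρ

/-!
`b(·,ρ)` is the relative entropy of the Bernoulli law with parameter `λ` with respect to the one
with parameter `μ = μ(ρ)`: it vanishes at `μ`, decreases strictly on `[0,μ]`, increases strictly on
`[μ,1]`, and `b(μ+h,ρ) ~ h²/(2μ(1-μ))`. Since `B(s,ρ,y) = b(μ + (y-μ)s, ρ)`, for `y ∈ {0,1}` the map
`s ↦ B(s,ρ,y)` increases strictly from `0` on `[0,1]`, so the intermediate value theorem gives
`s̃(s)`; comparing the two quadratic asymptotics gives `(s̃/s)² → (x-μ)²/(1-x-μ)²`, whose square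
root is `μ/(1-μ) = e^ρ` for `x = 0` and its inverse for `x = 1`.
-/

open Topology

theorem tendsto_comp_add_mul_div_sq {f f' : ℝ → ℝ} {a c : ℝ} (k : ℝ)
    (hf : ∀ᶠ x in 𝓝 a, HasDerivAt f (f' x) x) (hfa : f a = 0) (hf'a : f' a = 0)
    (hf' : HasDerivAt f' c a) :
    Tendsto (fun s => f (a + k * s) / s ^ 2) (𝓝[≠] 0) (𝓝 (k ^ 2 * c / 2)) := by
  have hline (s : ℝ) : HasDerivAt (fun s => a + k * s) k s := by
    simpa using ((hasDerivAt_id s).const_mul k).const_add a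
  have hline_tendsto : Tendsto (fun s => a + k * s) (𝓝 0) (𝓝 a) := by
    simpa using (hline 0).continuousAt.tendsto
  have hslope : Tendsto (fun s => s⁻¹ * f' (a + k * s)) (𝓝[≠] 0) (𝓝 (c * k)) := by
    simpa [hf'a] using hasDerivAt_iff_tendsto_slope_zero.mp (hf'.comp_of_eq 0 (hline 0) (by simp))
  refine HasDerivAt.lhopital_zero_nhdsNE (f' := fun s => f' (a + k * s) * k)
    (g' := fun s => 2 * s) ?_ ?_ ?_ ?_ ?_ ?_
  · filter_upwards [nhdsWithin_le_nhds (hline_tendsto.eventually hf)] with s hs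
    exact hs.comp s (hline s)
  · exact Eventually.of_forall fun s => by simpa [mul_comm] using hasDerivAt_pow 2 s
  · filter_upwards [self_mem_nhdsWithin] with s hs using mul_ne_zero two_ne_zero hs
  · have := hf.self_of_nhds.continuousAt.tendsto.comp hline_tendsto
    rw [hfa] at this
    exact this.mono_left nhdsWithin_le_nhds
  · exact ((continuous_pow 2).tendsto' 0 0 (by simp)).mono_left nhdsWithin_le_nhds
  · rw [show k ^ 2 * c / 2 = k / 2 * (c * k) by ring]
    exact (hslope.const_mul (k / 2)).congr fun s => by ring

theorem tendsto_nhdsGT_of_strictMonoOn_comp {α : Type*} {l : Filter α} {g : ℝ → ℝ} {st : α → ℝ}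
    {a b : ℝ} (hab : a < b) (hg : StrictMonoOn g (Icc a b)) (hst : ∀ᶠ i in l, st i ∈ Icc a b)
    (hlim : Tendsto (fun i => g (st i)) l (𝓝[>] (g a))) : Tendsto st l (𝓝[>] a) := by
  obtain ⟨hlim, hgt⟩ := tendsto_nhdsWithin_iff.1 hlim
  refine tendsto_nhdsWithin_iff.2 ⟨tendsto_order.2 ⟨fun c hc => ?_, fun ε hε => ?_⟩, ?_⟩
  · filter_upwards [hst] with i hi using hc.trans_le hi.1
  · have he : min ε b ∈ Icc a b := ⟨le_min hε.le hab.le, min_le_right _ _⟩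
    have hgap : g a < g (min ε b) := hg (left_mem_Icc.2 hab.le) he (lt_min hε hab)
    filter_upwards [hst, hlim.eventually (gt_mem_nhds hgap)] with i hi hgi
    exact ((hg.lt_iff_lt hi he).1 hgi).trans_le (min_le_left _ _)
  · filter_upwards [hst, hgt] with i hi hgi
    refine hi.1.lt_of_ne fun h => ?_
    rw [← h] at hgi
    exact lt_irrefl _ (mem_Ioi.1 hgi)

theorem tendsto_div_of_comp_eq {l : Filter ℝ} {g h st : ℝ → ℝ} {a b : ℝ}
    (hga : Tendsto (fun t => g t / t ^ 2) (𝓝[>] 0) (𝓝 a)) (ha : a ≠ 0)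
    (hhb : Tendsto (fun s => h s / s ^ 2) l (𝓝 b)) (hst : Tendsto st l (𝓝[>] 0))
    (heq : ∀ᶠ s in l, 0 < s ∧ h s ≠ 0 ∧ g (st s) = h s) :
    Tendsto (fun s => st s / s) l (𝓝 √(b / a)) := by
  have hst_pos : ∀ᶠ s in l, 0 < st s := hst.eventually self_mem_nhdsWithin
  have hsq : Tendsto (fun s => (st s / s) ^ 2) l (𝓝 (b / a)) := by
    refine (hhb.div (hga.comp hst) ha).congr' ?_
    filter_upwards [heq, hst_pos] with s hsgh hst0
    obtain ⟨hs, hh, hgh⟩ := hsgh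
    simp only [Pi.div_apply, Function.comp_apply, hgh]
    field_simp
  refine hsq.sqrt.congr' ?_
  filter_upwards [heq, hst_pos] with s hs hst0
  exact sqrt_sq (div_nonneg hst0.le hs.1.le)

theorem exists_comp_eq_of_tendsto_div_sq {g h : ℝ → ℝ} {a b : ℝ}
    (hg : StrictMonoOn g (Icc 0 1)) (hgc : ContinuousOn g (Icc 0 1)) (hg0 : g 0 = 0)
    (hga : Tendsto (fun t => g t / t ^ 2) (𝓝[>] 0) (𝓝 a)) (ha : a ≠ 0)
    (hhb : Tendsto (fun s => h s / s ^ 2) (𝓝[>] 0) (𝓝 b)) (hb : 0 < b) :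
    ∃ δ > 0, ∃ st : ℝ → ℝ, (∀ s ∈ Ioc 0 δ, st s ∈ Icc 0 1 ∧ h s = g (st s)) ∧
      Tendsto (fun s => st s / s) (𝓝[Ioc 0 δ] 0) (𝓝 √(b / a)) := by
  have hh0 : Tendsto h (𝓝[>] 0) (𝓝 0) := by
    have := hhb.mul (((continuous_pow 2).tendsto' 0 0 (by simp)).mono_left nhdsWithin_le_nhds)
    rw [mul_zero] at this
    refine this.congr' ?_
    filter_upwards [self_mem_nhdsWithin] with s hs
    have : s ≠ 0 := ne_of_gt hs
    field_simp
  have hh_pos : ∀ᶠ s in 𝓝[>] 0, 0 < h s := by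
    filter_upwards [hhb.eventually (lt_mem_nhds hb), self_mem_nhdsWithin] with s hs hs0
    exact (div_pos_iff_of_pos_right (pow_pos hs0 2)).1 hs
  have hg1 : 0 < g 1 := hg0 ▸ hg (left_mem_Icc.2 zero_le_one) (right_mem_Icc.2 zero_le_one) one_pos
  obtain ⟨δ, hδ, hsub⟩ :=
    mem_nhdsGT_iff_exists_Ioc_subset.1 (hh_pos.and (hh0.eventually (gt_mem_nhds hg1)))
  have hivt : ∀ s ∈ Ioc 0 δ, ∃ t ∈ Icc (0 : ℝ) 1, g t = h s := fun s hs =>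
    intermediate_value_Icc zero_le_one hgc ⟨by rw [hg0]; exact (hsub hs).1.le, (hsub hs).2.le⟩
  choose! st hst hgst using hivt
  refine ⟨δ, hδ, st, fun s hs => ⟨hst s hs, (hgst s hs).symm⟩, ?_⟩
  have hl : 𝓝[Ioc 0 δ] (0 : ℝ) ≤ 𝓝[>] 0 := nhdsWithin_mono 0 Ioc_subset_Ioi_self
  have hIoc : ∀ᶠ s in 𝓝[Ioc 0 δ] (0 : ℝ), s ∈ Ioc 0 δ := self_mem_nhdsWithin
  refine tendsto_div_of_comp_eq hga ha (hhb.mono_left hl) ?_ ?_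
  · refine tendsto_nhdsGT_of_strictMonoOn_comp zero_lt_one hg (hIoc.mono hst) ?_
    rw [hg0]
    refine ((tendsto_nhdsWithin_iff.2 ⟨hh0, hh_pos⟩).mono_left hl).congr' ?_
    filter_upwards [hIoc] with s hs using (hgst s hs).symm
  · filter_upwards [hIoc, hh_pos.filter_mono hl] with s hs hpos using ⟨hs.1, hpos.ne', hgst s hs⟩

section Bernoulli

variable (ρ : ℝ)

lemma mu1_pos : 0 < mu1 ρ := by
  unfold mu1
  positivity

lemma one_sub_mu1 : 1 - mu1 ρ = (1 + exp ρ)⁻¹ := by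
  unfold mu1
  field_simp
  ring

lemma mu1_lt_one : mu1 ρ < 1 := by
  have : 0 < (1 + exp ρ)⁻¹ := by positivity
  linarith [one_sub_mu1 ρ]

lemma exp_eq_mu1_div : exp ρ = mu1 ρ / (1 - mu1 ρ) := by
  rw [one_sub_mu1, mu1, div_inv_eq_mul, div_mul_cancel₀ _ (by positivity)]

lemma log_mu1_sub_log_one_sub_mu1 : log (mu1 ρ) - log (1 - mu1 ρ) = ρ := by
  rw [← log_div (mu1_pos ρ).ne' (sub_pos.2 (mu1_lt_one ρ)).ne', ← exp_eq_mu1_div, log_exp]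

lemma b1_mu1 : b1 (mu1 ρ) ρ = 0 := by
  have h := log_mu1_sub_log_one_sub_mu1 ρ
  have h' : log (1 - mu1 ρ) + log (1 + exp ρ) = 0 := by
    rw [one_sub_mu1, log_inv]
    ring
  unfold b1
  linear_combination mu1 ρ * h + h'

lemma continuous_b1 : Continuous fun l => b1 l ρ :=
  ((continuous_mul_log.add (continuous_mul_log.comp (continuous_const.sub continuous_id))).sub
    (continuous_id.mul continuous_const)).add continuous_const

lemma hasDerivAt_b1 {l : ℝ} (hl : l ∈ Ioo 0 1) :
    HasDerivAt (fun l => b1 l ρ) (log l - log (1 - l) - ρ) l := by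
  have hsub := (hasDerivAt_const l (1 : ℝ)).fun_sub (hasDerivAt_id' l)
  have h₁ := hasDerivAt_mul_log hl.1.ne'
  have h₂ := (hasDerivAt_mul_log (sub_pos.2 hl.2).ne').comp l hsub
  have h₃ := (hasDerivAt_id' l).mul_const ρ
  exact (((h₁.fun_add h₂).fun_sub h₃).add_const (log (1 + exp ρ))).congr_deriv (by ring)

lemma hasDerivAt_log_sub_log_one_sub {l : ℝ} (hl : l ∈ Ioo 0 1) :
    HasDerivAt (fun l => log l - log (1 - l) - ρ) (l⁻¹ + (1 - l)⁻¹) l := by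
  have hsub := (hasDerivAt_const l (1 : ℝ)).fun_sub (hasDerivAt_id' l)
  have h := (hasDerivAt_log (sub_pos.2 hl.2).ne').comp l hsub
  exact (((hasDerivAt_log hl.1.ne').fun_sub h).sub_const ρ).congr_deriv (by ring)

lemma strictMonoOn_b1 : StrictMonoOn (fun l => b1 l ρ) (Icc (mu1 ρ) 1) := by
  refine strictMonoOn_of_deriv_pos (convex_Icc _ _) (continuous_b1 ρ).continuousOn fun l hl => ?_
  rw [interior_Icc] at hl
  rw [(hasDerivAt_b1 ρ ⟨(mu1_pos ρ).trans hl.1, hl.2⟩).deriv]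
  have h₁ := log_lt_log (mu1_pos ρ) hl.1
  have h₂ := log_lt_log (sub_pos.2 hl.2) (by linarith [hl.1] : 1 - l < 1 - mu1 ρ)
  linarith [log_mu1_sub_log_one_sub_mu1 ρ]

lemma strictAntiOn_b1 : StrictAntiOn (fun l => b1 l ρ) (Icc 0 (mu1 ρ)) := by
  refine strictAntiOn_of_deriv_neg (convex_Icc _ _) (continuous_b1 ρ).continuousOn fun l hl => ?_
  rw [interior_Icc] at hl
  rw [(hasDerivAt_b1 ρ ⟨hl.1, hl.2.trans (mu1_lt_one ρ)⟩).deriv]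
  have h₁ := log_lt_log hl.1 hl.2
  have h₂ := log_lt_log (sub_pos.2 (mu1_lt_one ρ)) (by linarith [hl.2] : 1 - mu1 ρ < 1 - l)
  linarith [log_mu1_sub_log_one_sub_mu1 ρ]

lemma B1_eq (s y : ℝ) : B1 s ρ y = b1 (mu1 ρ + (y - mu1 ρ) * s) ρ := by
  unfold B1
  congr 1
  ring

lemma B1_zero (y : ℝ) : B1 0 ρ y = 0 := by
  simp [B1_eq, b1_mu1]

lemma continuous_B1 (y : ℝ) : Continuous fun s => B1 s ρ y := by
  simp only [B1_eq]
  exact (continuous_b1 ρ).comp (by fun_prop)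

lemma strictMonoOn_B1 {y : ℝ} (hy : y = 0 ∨ y = 1) :
    StrictMonoOn (fun s => B1 s ρ y) (Icc 0 1) := by
  have hμ₀ := mu1_pos ρ
  have hμ₁ := mu1_lt_one ρ
  have hcomp : (fun s => B1 s ρ y) = (fun l => b1 l ρ) ∘ fun s => mu1 ρ + (y - mu1 ρ) * s :=
    funext fun s => B1_eq ρ s y
  rw [hcomp]
  rcases hy with rfl | rfl
  · refine (strictAntiOn_b1 ρ).comp (fun s _ t _ hst => by nlinarith) fun s hs => ?_
    constructor <;> nlinarith [hs.1, hs.2]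
  · refine (strictMonoOn_b1 ρ).comp (fun s _ t _ hst => by nlinarith) fun s hs => ?_
    constructor <;> nlinarith [hs.1, hs.2]

lemma tendsto_B1_div_sq (y : ℝ) :
    Tendsto (fun s => B1 s ρ y / s ^ 2) (𝓝[≠] 0)
      (𝓝 ((y - mu1 ρ) ^ 2 * ((mu1 ρ)⁻¹ + (1 - mu1 ρ)⁻¹) / 2)) := by
  simp only [B1_eq]
  refine tendsto_comp_add_mul_div_sq (f := fun l => b1 l ρ)
    (f' := fun l => log l - log (1 - l) - ρ) _ ?_ (b1_mu1 ρ) ?_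
    (hasDerivAt_log_sub_log_one_sub ρ ⟨mu1_pos ρ, mu1_lt_one ρ⟩)
  · filter_upwards [Ioo_mem_nhds (mu1_pos ρ) (mu1_lt_one ρ)] with l hl using hasDerivAt_b1 ρ hl
  · linarith [log_mu1_sub_log_one_sub_mu1 ρ]

lemma sub_mu1_ne_zero {y : ℝ} (hy : y = 0 ∨ y = 1) : y - mu1 ρ ≠ 0 := by
  rcases hy with rfl | rfl <;> linarith [mu1_pos ρ, mu1_lt_one ρ]

end Bernoulli

/-- there is δ > 0 such that for each s ∈ (0,δ] there is s̃(s) ∈ [0,1]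
with B(s,ρ,x) = B(s̃(s),ρ,1−x); moreover s̃(s)/s → e^ρ as s → 0⁺ if x = 0, and
s̃(s)/s → e^{−ρ} if x = 1. -/
theorem stilde_exists (ρ : ℝ) (x : ℝ) (hx : x = 0 ∨ x = 1) :
    ∃ δ > (0 : ℝ), ∃ st : ℝ → ℝ,
      (∀ s ∈ Set.Ioc (0 : ℝ) δ, st s ∈ Set.Icc (0 : ℝ) 1 ∧ B1 s ρ x = B1 (st s) ρ (1 - x)) ∧
      (x = 0 → Filter.Tendsto (fun s => st s / s)
        (nhdsWithin 0 (Set.Ioc (0 : ℝ) δ)) (nhds (Real.exp ρ))) ∧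
      (x = 1 → Filter.Tendsto (fun s => st s / s)
        (nhdsWithin 0 (Set.Ioc (0 : ℝ) δ)) (nhds (Real.exp (-ρ)))) := by
  have hx' : 1 - x = 0 ∨ 1 - x = 1 := by rcases hx with rfl | rfl <;> norm_num
  have hμ₀ := mu1_pos ρ
  have hμ₁ := mu1_lt_one ρ
  set K := (mu1 ρ)⁻¹ + (1 - mu1 ρ)⁻¹
  have hK : 0 < K := by have := sub_pos.2 hμ₁; positivity
  have hIoi : Ioi (0 : ℝ) ⊆ {0}ᶜ := fun s hs => ne_of_gt hs
  obtain ⟨δ, hδ, st, hst, hlim⟩ := exists_comp_eq_of_tendsto_div_sq (strictMonoOn_B1 ρ hx')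
    (continuous_B1 ρ _).continuousOn (B1_zero ρ _)
    ((tendsto_B1_div_sq ρ _).mono_left (nhdsWithin_mono 0 hIoi))
    (by have := sub_mu1_ne_zero ρ hx'; positivity)
    ((tendsto_B1_div_sq ρ x).mono_left (nhdsWithin_mono 0 hIoi))
    (by have := sub_mu1_ne_zero ρ hx; positivity)
  have hratio : √((x - mu1 ρ) ^ 2 * K / 2 / ((1 - x - mu1 ρ) ^ 2 * K / 2))
      = |(x - mu1 ρ) / (1 - x - mu1 ρ)| := by
    rw [← sqrt_sq_eq_abs, div_pow]
    congr 1
    field_simp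
  rw [hratio] at hlim
  refine ⟨δ, hδ, st, hst, fun hx0 => ?_, fun hx1 => ?_⟩
  · subst hx0
    convert hlim using 2
    rw [exp_eq_mu1_div, zero_sub, sub_zero, abs_div, abs_neg, abs_of_pos hμ₀,
      abs_of_pos (sub_pos.2 hμ₁)]
  · subst hx1
    convert hlim using 2
    rw [exp_neg, exp_eq_mu1_div, inv_div, sub_self, zero_sub, abs_div, abs_neg, abs_of_pos hμ₀,
      abs_of_pos (sub_pos.2 hμ₁)]
end
end
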